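/- If n balls are thrown independently and uniformly into d bins with μ = n/d ≥ 1, and z > 1 satisfies z^z = n, then the probability that some bin load is at least μ·e·z is at most 2/n. -/

import Mathlib

/-! A bin receiving at least `k` balls receives some `k`-set of balls, so a union bound over
these sets bounds the probability of that event by `C(n, k) / d ^ k ≤ (e n / (k d)) ^ k`.
For `k = ⌈μ e z⌉` the base is at most `1 / z`, so the bound is at most
`z ^ (-e z) = n ^ (-e) ≤ n ^ (-2)`, and a union bound over the `d ≤ n` bins gives `1 / n`. -/

open Finset

section Fibers

variable {α β : Type*} [Fintype α] [DecidableEq α] [Fintype β] [DecidableEq β]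

lemma card_filter_forall_mem_apply_eq (S : Finset α) (b : β) :
    #{ω : α → β | ∀ i ∈ S, ω i = b} = Fintype.card β ^ (Fintype.card α - #S) := by
  have : ({ω : α → β | ∀ i ∈ S, ω i = b} : Finset (α → β)) =
      Fintype.piFinset fun i => if i ∈ S then {b} else univ := by
    ext ω
    simp only [mem_filter, mem_univ, true_and, Fintype.mem_piFinset]
    refine forall_congr' fun i => ?_
    split_ifs <;> simp [*]
  rw [this, Fintype.card_piFinset]
  simp [apply_ite card, prod_ite, filter_not, card_sdiff_of_subset]

lemma card_filter_le_card_fiber_le (b : β) (k : ℕ) :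
    #{ω : α → β | k ≤ #{i | ω i = b}} ≤
      (Fintype.card α).choose k * Fintype.card β ^ (Fintype.card α - k) := by
  have hsub : ({ω : α → β | k ≤ #{i | ω i = b}} : Finset (α → β)) ⊆
      (univ.powersetCard k).biUnion fun S => {ω : α → β | ∀ i ∈ S, ω i = b} := by
    intro ω hω
    obtain ⟨S, hS, hScard⟩ := exists_subset_card_eq (mem_filter.1 hω).2
    simp only [mem_biUnion, mem_powersetCard, mem_filter, mem_univ, true_and]
    exact ⟨S, ⟨subset_univ S, hScard⟩, fun i hi => (mem_filter.1 (hS hi)).2⟩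
  have hpiece : ∀ S ∈ univ.powersetCard k,
      #{ω : α → β | ∀ i ∈ S, ω i = b} ≤ Fintype.card β ^ (Fintype.card α - k) := by
    intro S hS
    rw [card_filter_forall_mem_apply_eq, (mem_powersetCard.1 hS).2]
  calc _ ≤ _ := card_le_card hsub
    _ ≤ _ := card_biUnion_le_card_mul _ _ _ hpiece
    _ = _ := by rw [card_powersetCard, card_univ]

lemma card_filter_le_card_fiber_mul_pow_le (b : β) (k : ℕ) :
    #{ω : α → β | k ≤ #{i | ω i = b}} * Fintype.card β ^ k ≤
      (Fintype.card α).choose k * Fintype.card β ^ Fintype.card α := by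
  rcases le_or_gt k (Fintype.card α) with hk | hk
  · calc _ ≤ (Fintype.card α).choose k * Fintype.card β ^ (Fintype.card α - k) *
          Fintype.card β ^ k := Nat.mul_le_mul_right _ (card_filter_le_card_fiber_le b k)
      _ = _ := by rw [mul_assoc, ← pow_add, Nat.sub_add_cancel hk]
  · have := card_filter_le_card_fiber_le (α := α) b k
    rw [Nat.choose_eq_zero_of_lt hk, zero_mul, Nat.le_zero] at this
    simp [this]

lemma card_filter_exists_le_card_fiber_mul_pow_le (k : ℕ) :
    #{ω : α → β | ∃ b, k ≤ #{i | ω i = b}} * Fintype.card β ^ k ≤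
      Fintype.card β * (Fintype.card α).choose k * Fintype.card β ^ Fintype.card α := by
  have hunion : ({ω : α → β | ∃ b, k ≤ #{i | ω i = b}} : Finset (α → β)) =
      univ.biUnion fun b => {ω : α → β | k ≤ #{i | ω i = b}} := by
    ext ω; simp
  rw [hunion]
  calc _ ≤ (∑ b, #{ω : α → β | k ≤ #{i | ω i = b}}) * Fintype.card β ^ k :=
        Nat.mul_le_mul_right _ card_biUnion_le
    _ ≤ ∑ _b : β, (Fintype.card α).choose k * Fintype.card β ^ Fintype.card α := by
        rw [sum_mul]
        exact sum_le_sum fun b _ => card_filter_le_card_fiber_mul_pow_le b k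
    _ = _ := by rw [sum_const, card_univ, smul_eq_mul, mul_assoc]

end Fibers

open Real

lemma Nat.choose_le_exp_one_mul_div_pow (n k : ℕ) :
    (n.choose k : ℝ) ≤ (exp 1 * n / k) ^ k := by
  rcases Nat.eq_zero_or_pos k with rfl | hk
  · simp
  have hkk : (k : ℝ) ^ k ≤ exp 1 ^ k * k.factorial := by
    rw [exp_one_pow, ← div_le_iff₀ (by positivity)]
    exact pow_div_factorial_le_exp _ (Nat.cast_nonneg k) k
  calc (n.choose k : ℝ) ≤ n ^ k / k.factorial := Nat.choose_le_pow_div k n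
    _ ≤ _ := by
      rw [div_pow, mul_pow, div_le_div_iff₀ (by positivity) (pow_pos (by positivity) k),
        mul_right_comm, mul_comm _ ((n : ℝ) ^ k)]
      exact mul_le_mul_of_nonneg_left hkk (by positivity)

lemma Nat.choose_div_pow_le_inv_pow {n d k : ℕ} {z : ℝ} (hz : 0 < z)
    (hk : n * (exp 1 * z) ≤ k * d) : (n.choose k : ℝ) / d ^ k ≤ z⁻¹ ^ k := by
  have hbase : exp 1 * n / k / d ≤ z⁻¹ := by
    rw [div_div]
    refine div_le_of_le_mul₀ (by positivity) (by positivity) ?_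
    rw [inv_mul_eq_div, le_div_iff₀ hz]
    linarith
  calc (n.choose k : ℝ) / d ^ k ≤ (exp 1 * n / k) ^ k / d ^ k := by
        gcongr; exact Nat.choose_le_exp_one_mul_div_pow n k
    _ = (exp 1 * n / k / d) ^ k := by rw [div_pow _ (d : ℝ)]
    _ ≤ z⁻¹ ^ k := by gcongr

lemma inv_rpow_le_inv_rpow_self_sq {z y : ℝ} (hz : 1 < z) (hy : exp 1 * z ≤ y) :
    z⁻¹ ^ y ≤ ((z ^ z) ^ 2)⁻¹ := by
  have hz0 : 0 < z := by linarith
  have hzz : 1 ≤ z ^ z := one_le_rpow hz.le hz0.le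
  calc z⁻¹ ^ y ≤ z⁻¹ ^ (z * exp 1) :=
        rpow_le_rpow_of_exponent_ge (by positivity) (inv_le_one_of_one_le₀ hz.le)
          (by linarith [mul_comm z (exp 1)])
    _ = ((z ^ z) ^ exp 1)⁻¹ := by rw [inv_rpow hz0.le, rpow_mul hz0.le]
    _ ≤ ((z ^ z) ^ 2)⁻¹ := by
        rw [← rpow_natCast]
        gcongr
        push_cast
        linarith [add_one_le_exp 1]

open scoped Classical in
/-- If `n` balls are thrown independently and uniformly into `d` bins with
`μ = n/d ≥ 1`, and `z > 1` satisfies `z^z = n`, then the probability that some bin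
load is at least `μ·e·z` is at most `2/n`. -/
theorem stmt16 (n d : ℕ) (hd : 0 < d) (hμ : 1 ≤ (n : ℝ) / d) (z : ℝ) (hz : 1 < z)
    (hzn : z ^ z = (n : ℝ)) :
    ((Finset.univ.filter fun ω : Fin n → Fin d =>
        ∃ b : Fin d, ((n : ℝ) / d) * (Real.exp 1 * z)
          ≤ ((Finset.univ.filter fun k => ω k = b).card : ℝ)).card : ℝ) / (d : ℝ) ^ n
      ≤ 2 / n := by
  have hd0 : (0 : ℝ) < d := Nat.cast_pos.2 hd
  have hz0 : 0 < z := by linarith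
  have hn0 : (0 : ℝ) < n := hzn ▸ rpow_pos_of_pos hz0 z
  have hdn : (d : ℝ) ≤ n := by rwa [one_le_div hd0] at hμ
  set k := ⌈(n : ℝ) / d * (exp 1 * z)⌉₊
  have hceil := Nat.le_ceil ((n : ℝ) / d * (exp 1 * z))
  have hk : exp 1 * z ≤ k := (le_mul_of_one_le_left (by positivity) hμ).trans hceil
  have hkd : n * (exp 1 * z) ≤ k * d :=
    calc _ = n / d * (exp 1 * z) * d := by field_simp
      _ ≤ k * d := by gcongr
  calc _ ≤ (#{ω : Fin n → Fin d | ∃ b, k ≤ #{i | ω i = b}} : ℝ) / d ^ n := by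
        gcongr with ω
        exact Nat.ceil_le.2
    _ ≤ d * (n.choose k : ℝ) / d ^ k := by
        rw [div_le_iff₀ (by positivity), div_mul_eq_mul_div, le_div_iff₀ (by positivity)]
        have h := card_filter_exists_le_card_fiber_mul_pow_le (α := Fin n) (β := Fin d) k
        simp only [Fintype.card_fin] at h
        -- `convert` bridges the classical decidability instances of the statement
        exact_mod_cast (by convert h :
          #{ω : Fin n → Fin d | ∃ b, k ≤ #{i | ω i = b}} * d ^ k ≤ d * n.choose k * d ^ n)
    _ ≤ d * z⁻¹ ^ (k : ℝ) := by
        rw [rpow_natCast, mul_div_assoc]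
        gcongr
        exact Nat.choose_div_pow_le_inv_pow hz0 hkd
    _ ≤ n * ((n : ℝ) ^ 2)⁻¹ := by
        gcongr
        exact hzn ▸ inv_rpow_le_inv_rpow_self_sq hz hk
    _ ≤ 2 / n := by
        rw [sq, mul_inv, ← mul_assoc, mul_inv_cancel₀ hn0.ne', one_mul, div_eq_mul_inv]
        exact le_mul_of_one_le_left (inv_nonneg.2 hn0.le) one_le_two
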